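/- arXiv:2603.06488 — 3 statements merged into one kernel-verified Lean document; each statement's English description precedes it below -/
import Mathlib

section
/- Let ν, r, γ be real numbers with ν > 0 and γ ∈ ℝ. Let σ := !![0, 1; -1, 0], Γ := diag(ν·exp(2r), ν·exp(−2r)), K := −γ·I + 2γ·Γ⁻¹, M^Bayes := 2γ·I + i·(K·σ + σ·Kᵀ) as a 2×2 complex matrix, and u := (1/√2)·(1, i)ᵀ ∈ ℂ². Then the quadratic form satisfies u† · M^Bayes · u = 4γ·(1 − cosh(2r)/ν). -/
open Matrix Complex

/-- The one-mode symplectic form in HHW conventions, as a complex matrix. -/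
noncomputable def symp : Matrix (Fin 2) (Fin 2) ℂ := !![0, 1; -1, 0]

/-- Squeezed-thermal reference covariance `diag(ν e^{2r}, ν e^{-2r})`, as a complex matrix. -/
noncomputable def Gam (ν r : ℝ) : Matrix (Fin 2) (Fin 2) ℂ :=
  Matrix.diagonal ![((ν * Real.exp (2 * r) : ℝ) : ℂ), ((ν * Real.exp (-(2 * r)) : ℝ) : ℂ)]

/-- Bayes reverse drift `K = -γ I + 2γ Γ⁻¹`. -/
noncomputable def Kbayes (ν r γ : ℝ) : Matrix (Fin 2) (Fin 2) ℂ :=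
  (-(γ : ℂ)) • (1 : Matrix (Fin 2) (Fin 2) ℂ) + ((2 * γ : ℝ) : ℂ) • (Gam ν r)⁻¹

/-- Generator CP matrix `M^Bayes = 2γ I + i (K σ + σ Kᵀ)`. -/
noncomputable def MBayes (ν r γ : ℝ) : Matrix (Fin 2) (Fin 2) ℂ :=
  ((2 * γ : ℝ) : ℂ) • (1 : Matrix (Fin 2) (Fin 2) ℂ) +
    Complex.I • (Kbayes ν r γ * symp + symp * (Kbayes ν r γ)ᵀ)

/-- The vector `u = (1/√2)(1, i)ᵀ`. -/
noncomputable def uvec : Fin 2 → ℂ :=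
  ![(1 : ℂ) / (Real.sqrt 2 : ℂ), Complex.I / (Real.sqrt 2 : ℂ)]

/-!
The map `A ↦ A σ + σ Aᵀ` sends every `2 × 2` matrix to an antisymmetric one, hence to a multiple
of `σ`, namely `(tr A) σ`; so `M^Bayes = 2γ I + i (tr K) σ`. As `u` is a unit eigenvector of `σ`
for the eigenvalue `i`, `u† M^Bayes u = 2γ - tr K`, and `tr K = -2γ + 2γ tr Γ⁻¹ = -2γ + 4γ cosh(2r)/ν`.
-/

theorem mul_add_mul_transpose_eq_trace_smul {R : Type*} [CommRing R]
    (A : Matrix (Fin 2) (Fin 2) R) :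
    A * !![0, 1; -1, 0] + !![0, 1; -1, 0] * Aᵀ = A.trace • !![0, 1; -1, 0] := by
  ext i j
  fin_cases i <;> fin_cases j <;>
    simp [Matrix.mul_apply, vecMul, dotProduct, Fin.sum_univ_two, trace_fin_two]

theorem inv_diagonal_of_ne_zero {n K : Type*} [Fintype n] [DecidableEq n] [Field K]
    {v : n → K} (hv : ∀ i, v i ≠ 0) : (diagonal v)⁻¹ = diagonal fun i ↦ (v i)⁻¹ :=
  inv_eq_left_inv <| by rw [diagonal_mul_diagonal, ← diagonal_one]; simp [hv]

theorem trace_inv_Gam {ν : ℝ} (hν : ν ≠ 0) (r : ℝ) :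
    (Gam ν r)⁻¹.trace = ((2 * Real.cosh (2 * r) / ν : ℝ) : ℂ) := by
  rw [Gam, inv_diagonal_of_ne_zero, trace_diagonal, Fin.sum_univ_two]
  · simp only [cons_val_zero, cons_val_one, cons_val_fin_one]
    rw [Real.cosh_eq, Real.exp_neg]
    push_cast
    field_simp
    ring
  · intro i
    fin_cases i <;> simp [hν]

theorem trace_Kbayes {ν : ℝ} (hν : ν ≠ 0) (r γ : ℝ) :
    (Kbayes ν r γ).trace = ((-2 * γ + 4 * γ * Real.cosh (2 * r) / ν : ℝ) : ℂ) := by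
  rw [Kbayes, trace_add, trace_smul, trace_smul, trace_one, trace_inv_Gam hν]
  push_cast
  simp only [Fintype.card_fin, Nat.cast_ofNat, smul_eq_mul]
  ring

theorem MBayes_eq_smul_one_add_smul_symp (ν r γ : ℝ) :
    MBayes ν r γ = ((2 * γ : ℝ) : ℂ) • 1 + (I * (Kbayes ν r γ).trace) • symp := by
  rw [MBayes, symp, mul_add_mul_transpose_eq_trace_smul, smul_smul]

theorem symp_mulVec_uvec : symp *ᵥ uvec = I • uvec := by
  ext i
  fin_cases i <;>
    simp [symp, uvec, mulVec, dotProduct, Fin.sum_univ_two, div_eq_mul_inv, ← mul_assoc]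

theorem star_uvec_dotProduct_uvec : star uvec ⬝ᵥ uvec = 1 := by
  have h2 : ((Real.sqrt 2 : ℝ) : ℂ) ^ 2 = 2 := by
    rw [← ofReal_pow, Real.sq_sqrt zero_le_two, ofReal_ofNat]
  simp only [dotProduct, uvec, Fin.sum_univ_two, Pi.star_apply, RCLike.star_def, cons_val_zero,
    cons_val_one, cons_val_fin_one, map_div₀, map_one, conj_ofReal, conj_I]
  field_simp
  rw [h2, I_sq]
  ring

/-- Quadratic form of the Bayes CP matrix at `u`:
`u† M^Bayes u = 4γ (1 - cosh(2r)/ν)`. -/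
theorem quadratic_form_MBayes (ν r γ : ℝ) (hν : 0 < ν) :
    star uvec ⬝ᵥ (MBayes ν r γ).mulVec uvec
      = ((4 * γ * (1 - Real.cosh (2 * r) / ν) : ℝ) : ℂ) := by
  rw [MBayes_eq_smul_one_add_smul_symp, add_mulVec, smul_mulVec, smul_mulVec, one_mulVec,
    symp_mulVec_uvec, smul_smul, dotProduct_add, dotProduct_smul, dotProduct_smul,
    star_uvec_dotProduct_uvec, trace_Kbayes hν.ne']
  push_cast
  linear_combination (-2 * γ + 4 * γ * cosh (2 * r) / ν : ℂ) * I_mul_I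
end

section
/- Let ν, r, γ be real numbers with ν > 0 and γ ∈ ℝ. Let σ := !![0, 1; -1, 0], Γ := diag(ν·exp(2r), ν·exp(−2r)), K := −γ·I + 2γ·Γ⁻¹, and M^Bayes := 2γ·I + i·(K·σ + σ·Kᵀ) as a 2×2 complex matrix. Let u = (1/√2)·(1, i)ᵀ, λ₊ = 4γ·cosh(2r)/ν and λ₋ = 4γ·(1 − cosh(2r)/ν). Then M^Bayes · u = λ₋ · u and M^Bayes · (conj u) = λ₊ · (conj u), where conj u is the entrywise conjugate of u, and the multiset of eigenvalues of M^Bayes equals {4γ·cosh(2r)/ν, 4γ·(1 − cosh(2r)/ν)}. -/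
open Matrix Complex

lemma Gam_inv (ν r : ℝ) (hν : 0 < ν) :
    (Gam ν r)⁻¹ = Matrix.diagonal ![((ν * Real.exp (2 * r) : ℝ) : ℂ)⁻¹,
      ((ν * Real.exp (-(2 * r)) : ℝ) : ℂ)⁻¹] := by
  have h1 : ((ν * Real.exp (2 * r) : ℝ) : ℂ) ≠ 0 := by
    exact_mod_cast (by positivity : (ν * Real.exp (2 * r) : ℝ) ≠ 0)
  have h2 : ((ν * Real.exp (-(2 * r)) : ℝ) : ℂ) ≠ 0 := by
    exact_mod_cast (by positivity : (ν * Real.exp (-(2 * r)) : ℝ) ≠ 0)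
  apply Matrix.inv_eq_right_inv
  rw [Gam, Matrix.diagonal_mul_diagonal]
  ext i j
  fin_cases i <;> fin_cases j <;>
    simp [Matrix.diagonal, Matrix.one_apply] <;>
    (field_simp [Complex.exp_ne_zero, (by exact_mod_cast hν.ne' : (ν:ℂ) ≠ 0)] <;> ring)

lemma MBayes_eq (ν r γ : ℝ) (hν : 0 < ν) :
    MBayes ν r γ = !![((2*γ:ℝ):ℂ), Complex.I * ((4*γ*Real.cosh (2*r)/ν - 2*γ : ℝ):ℂ);
      -(Complex.I * ((4*γ*Real.cosh (2*r)/ν - 2*γ : ℝ):ℂ)), ((2*γ:ℝ):ℂ)] := by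
  have hν' : (ν:ℂ) ≠ 0 := by exact_mod_cast hν.ne'
  ext i j
  fin_cases i <;> fin_cases j <;>
    simp [MBayes, Kbayes, Gam_inv ν r hν, symp, Matrix.mul_apply, Matrix.vecMul,
      Matrix.mulVec, dotProduct, Fin.sum_univ_two, Matrix.one_apply, Matrix.diagonal,
      Real.cosh_eq] <;>
    (push_cast; rw [Complex.exp_neg]; field_simp [Complex.exp_ne_zero]; ring)

/-- Spectral structure of `M^Bayes`: `u` is an eigenvector with eigenvalue
`λ₋ = 4γ(1 - cosh(2r)/ν)`, the entrywise conjugate of `u` is an eigenvector with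
eigenvalue `λ₊ = 4γ cosh(2r)/ν`, and the multiset of eigenvalues (roots of the
characteristic polynomial) is `{λ₊, λ₋}`. -/
theorem MBayes_eigenvalues (ν r γ : ℝ) (hν : 0 < ν) :
    (MBayes ν r γ).mulVec uvec
        = ((4 * γ * (1 - Real.cosh (2 * r) / ν) : ℝ) : ℂ) • uvec ∧
    (MBayes ν r γ).mulVec (star uvec)
        = ((4 * γ * Real.cosh (2 * r) / ν : ℝ) : ℂ) • (star uvec) ∧
    (MBayes ν r γ).charpoly.roots
        = {((4 * γ * Real.cosh (2 * r) / ν : ℝ) : ℂ),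
           ((4 * γ * (1 - Real.cosh (2 * r) / ν) : ℝ) : ℂ)} := by
  have hM := MBayes_eq ν r γ hν
  refine ⟨?_, ?_, ?_⟩
  · rw [hM]
    ext i
    fin_cases i <;>
      simp [Matrix.mulVec, dotProduct, Fin.sum_univ_two, uvec] <;>
      push_cast <;>
      [skip; (field_simp; ring)] <;>
      linear_combination Complex.I_sq * ((4*(γ:ℂ)*Complex.cosh (2*(r:ℂ))/(ν:ℂ) - 2*γ)/(Real.sqrt 2 : ℂ))
  · rw [hM]
    ext i
    fin_cases i
    · simp [Matrix.mulVec, dotProduct, Fin.sum_univ_two, uvec, Pi.star_apply,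
        Complex.conj_I, map_div₀]
      push_cast
      linear_combination (-Complex.I_sq) * ((4*(γ:ℂ)*Complex.cosh (2*(r:ℂ))/(ν:ℂ) - 2*γ)/(Real.sqrt 2 : ℂ))
    · simp [Matrix.mulVec, dotProduct, Fin.sum_univ_two, uvec, Pi.star_apply,
        Complex.conj_I, map_div₀]
      push_cast
      ring
  · have hcp : (MBayes ν r γ).charpoly
        = (Polynomial.X - Polynomial.C ((4 * γ * Real.cosh (2 * r) / ν : ℝ) : ℂ))
          * (Polynomial.X - Polynomial.C ((4 * γ * (1 - Real.cosh (2 * r) / ν) : ℝ) : ℂ)) := by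
      rw [Matrix.charpoly, Matrix.det_fin_two, hM]
      apply Polynomial.funext
      intro x
      simp [Matrix.charmatrix_apply]
      push_cast
      linear_combination Complex.I_sq * ((4*(γ:ℂ)*Complex.cosh (2*(r:ℂ))/(ν:ℂ) - 2*γ))^2
    rw [hcp, Polynomial.roots_mul (mul_ne_zero (Polynomial.X_sub_C_ne_zero _)
      (Polynomial.X_sub_C_ne_zero _)), Polynomial.roots_X_sub_C, Polynomial.roots_X_sub_C]
    rfl
end

section
/- Let σ := !![0, 1; -1, 0], Z := diag(1, −1), and let X, Y be real 2×2 matrices with Y symmetric. For real μ > 1 define the 4×4 complex block matrix H(μ) := fromBlocks (μ·X·Xᵀ + Y + i·σ) (√(μ²−1)·X·Z) (√(μ²−1)·Z·Xᵀ) (μ·I + i·σ). Then H(μ) is positive semidefinite for all μ > 1 if and only if the 2×2 complex matrix Y + i·(σ − X·σ·Xᵀ) is positive semidefinite. In fact, for each fixed μ > 1, H(μ) is positive semidefinite iff Y + i·(σ − X·σ·Xᵀ) is positive semidefinite. -/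
/-!
For `μ > 1` the lower-right block `D = μ + iσ` of `H(μ)` is positive definite, so `H(μ) ⪰ 0` iff
its Schur complement `A - B D⁻¹ Bᴴ` is. Since `σ² = -1`, `D⁻¹ = (μ - iσ) / (μ² - 1)`, and since
`ZσZ = -σ`, the correction `B D⁻¹ Bᴴ = (μ² - 1) X Z D⁻¹ Z Xᵀ` equals `X (μ + iσ) Xᵀ`. The Schur
complement is therefore `Y + i(σ - XσXᵀ)`, whatever `μ`.
-/

open Matrix Complex
open scoped ComplexOrder

/-- `Z = diag(1, −1)` as a complex matrix. -/
noncomputable def Zmat : Matrix (Fin 2) (Fin 2) ℂ := !![1, 0; 0, -1]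

/-- TMSV physicality matrix `H(μ) = Γ'_{AB}(μ) + i σ_{AB}` for the output of a Gaussian
channel `(X, Y)` on one half of a two-mode squeezed vacuum with parameter `μ`. -/
noncomputable def Hmat (X Y : Matrix (Fin 2) (Fin 2) ℝ) (μ : ℝ) :
    Matrix (Fin 2 ⊕ Fin 2) (Fin 2 ⊕ Fin 2) ℂ :=
  Matrix.fromBlocks
    ((μ : ℂ) • (X.map Complex.ofReal * (X.map Complex.ofReal)ᵀ)
      + Y.map Complex.ofReal + Complex.I • symp)
    ((Real.sqrt (μ ^ 2 - 1) : ℂ) • (X.map Complex.ofReal * Zmat))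
    ((Real.sqrt (μ ^ 2 - 1) : ℂ) • (Zmat * (X.map Complex.ofReal)ᵀ))
    ((μ : ℂ) • (1 : Matrix (Fin 2) (Fin 2) ℂ) + Complex.I • symp)

lemma symp_mul_symp : symp * symp = -1 := by
  ext i j
  fin_cases i <;> fin_cases j <;> simp [symp, mul_apply, Fin.sum_univ_two]

lemma Zmat_mul_Zmat : Zmat * Zmat = 1 := by
  ext i j
  fin_cases i <;> fin_cases j <;> simp [Zmat, mul_apply, Fin.sum_univ_two]

lemma Zmat_mul_symp_mul_Zmat : Zmat * symp * Zmat = -symp := by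
  ext i j
  fin_cases i <;> fin_cases j <;> simp [Zmat, symp, mul_apply, Fin.sum_univ_two]

lemma conjTranspose_Zmat : Zmatᴴ = Zmat := by
  ext i j
  fin_cases i <;> fin_cases j <;> simp [Zmat]

lemma conjTranspose_map_ofReal {m n : Type*} (X : Matrix m n ℝ) :
    (X.map ofReal)ᴴ = (X.map ofReal)ᵀ := by
  ext i j
  simp

lemma smul_one_add_I_smul_symp_mul_sub (μ : ℂ) :
    (μ • (1 : Matrix (Fin 2) (Fin 2) ℂ) + I • symp) * (μ • 1 - I • symp) = (μ ^ 2 - 1) • 1 := by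
  simp only [add_mul, mul_sub, smul_mul_smul_comm, mul_one, one_mul, symp_mul_symp, I_mul_I]
  module

lemma inv_smul_one_add_I_smul_symp {μ : ℂ} (hμ : μ ^ 2 ≠ 1) :
    (μ • (1 : Matrix (Fin 2) (Fin 2) ℂ) + I • symp)⁻¹ = (μ ^ 2 - 1)⁻¹ • (μ • 1 - I • symp) := by
  apply inv_eq_right_inv
  rw [mul_smul_comm, smul_one_add_I_smul_symp_mul_sub, smul_smul,
    inv_mul_cancel₀ (sub_ne_zero.mpr hμ), one_smul]

lemma Zmat_mul_smul_one_sub_I_smul_symp_mul_Zmat (μ : ℂ) :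
    Zmat * (μ • 1 - I • symp) * Zmat = μ • 1 + I • symp := by
  simp only [mul_sub, sub_mul, mul_smul_comm, smul_mul_assoc, mul_one, Zmat_mul_Zmat,
    Zmat_mul_symp_mul_Zmat, smul_neg, sub_neg_eq_add]

lemma one_add_I_smul_symp_posSemidef :
    ((1 : Matrix (Fin 2) (Fin 2) ℂ) + I • symp).PosSemidef := by
  have h : (1 : Matrix (Fin 2) (Fin 2) ℂ) + I • symp = (!![1, I] : Matrix (Fin 1) (Fin 2) ℂ)ᴴ * !![1, I] := by
    ext i j
    fin_cases i <;> fin_cases j <;> simp [symp, mul_apply, one_apply]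
  rw [h]
  exact posSemidef_conjTranspose_mul_self _

lemma smul_one_add_I_smul_symp_posDef {μ : ℝ} (hμ : 1 < μ) :
    ((μ : ℂ) • (1 : Matrix (Fin 2) (Fin 2) ℂ) + I • symp).PosDef := by
  have h : (μ : ℂ) • (1 : Matrix (Fin 2) (Fin 2) ℂ) + I • symp
      = diagonal (fun _ => ((μ - 1 : ℝ) : ℂ)) + (1 + I • symp) := by
    rw [← smul_one_eq_diagonal]
    push_cast
    module
  rw [h]
  refine PosDef.add_posSemidef ?_ one_add_I_smul_symp_posSemidef
  exact posDef_diagonal_iff.mpr fun _ => zero_lt_real.mpr (by linarith)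

section Hmat

variable (X Y : Matrix (Fin 2) (Fin 2) ℝ) {μ : ℝ}

lemma conjTranspose_Hmat_offDiagonal :
    ((Real.sqrt (μ ^ 2 - 1) : ℂ) • (X.map ofReal * Zmat))ᴴ
      = (Real.sqrt (μ ^ 2 - 1) : ℂ) • (Zmat * (X.map ofReal)ᵀ) := by
  rw [conjTranspose_smul, conjTranspose_mul, conjTranspose_Zmat, conjTranspose_map_ofReal,
    star_def, conj_ofReal]

lemma Hmat_eq_fromBlocks_conjTranspose :
    Hmat X Y μ = fromBlocks
      ((μ : ℂ) • (X.map ofReal * (X.map ofReal)ᵀ) + Y.map ofReal + I • symp)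
      ((Real.sqrt (μ ^ 2 - 1) : ℂ) • (X.map ofReal * Zmat))
      ((Real.sqrt (μ ^ 2 - 1) : ℂ) • (X.map ofReal * Zmat))ᴴ
      ((μ : ℂ) • 1 + I • symp) := by
  rw [conjTranspose_Hmat_offDiagonal]
  rfl

lemma Hmat_schurComplement (hμ : 1 < μ) :
    (μ : ℂ) • (X.map ofReal * (X.map ofReal)ᵀ) + Y.map ofReal + I • symp
      - (Real.sqrt (μ ^ 2 - 1) : ℂ) • (X.map ofReal * Zmat) * ((μ : ℂ) • 1 + I • symp)⁻¹
        * ((Real.sqrt (μ ^ 2 - 1) : ℂ) • (X.map ofReal * Zmat))ᴴ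
    = Y.map ofReal + I • (symp - X.map ofReal * symp * (X.map ofReal)ᵀ) := by
  have hμ2 : (μ : ℂ) ^ 2 ≠ 1 := by
    exact_mod_cast (one_lt_pow₀ hμ two_ne_zero).ne'
  have hsqrt : (Real.sqrt (μ ^ 2 - 1) : ℂ) * (((μ : ℂ) ^ 2 - 1)⁻¹ * Real.sqrt (μ ^ 2 - 1)) = 1 := by
    rw [mul_left_comm, ← ofReal_mul, Real.mul_self_sqrt (by nlinarith)]
    push_cast
    exact inv_mul_cancel₀ (sub_ne_zero.mpr hμ2)
  have hcorr : (Real.sqrt (μ ^ 2 - 1) : ℂ) • (X.map ofReal * Zmat) * ((μ : ℂ) • 1 + I • symp)⁻¹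
        * ((Real.sqrt (μ ^ 2 - 1) : ℂ) • (X.map ofReal * Zmat))ᴴ
      = X.map ofReal * ((μ : ℂ) • 1 + I • symp) * (X.map ofReal)ᵀ := by
    rw [conjTranspose_Hmat_offDiagonal, inv_smul_one_add_I_smul_symp hμ2,
      ← Zmat_mul_smul_one_sub_I_smul_symp_mul_Zmat]
    simp only [smul_mul_assoc, mul_smul_comm, smul_smul, hsqrt, one_smul, Matrix.mul_assoc]
  rw [hcorr]
  simp only [Matrix.mul_add, Matrix.add_mul, mul_smul_comm, smul_mul_assoc, Matrix.mul_one]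
  module

theorem Hmat_posSemidef_iff (hμ : 1 < μ) :
    (Hmat X Y μ).PosSemidef ↔
      (Y.map ofReal + I • (symp - X.map ofReal * symp * (X.map ofReal)ᵀ)).PosSemidef := by
  have hD := smul_one_add_I_smul_symp_posDef hμ
  have := hD.isUnit.invertible
  rw [Hmat_eq_fromBlocks_conjTranspose, PosDef.fromBlocks₂₂ _ _ hD, Hmat_schurComplement X Y hμ]

end Hmat

theorem tmsv_cp_equivalence_general (X Y : Matrix (Fin 2) (Fin 2) ℝ) :
    ((∀ μ : ℝ, 1 < μ → (Hmat X Y μ).PosSemidef) ↔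
      (Y.map Complex.ofReal
        + Complex.I • (symp - X.map Complex.ofReal * symp * (X.map Complex.ofReal)ᵀ)).PosSemidef) ∧
    (∀ μ : ℝ, 1 < μ → ((Hmat X Y μ).PosSemidef ↔
      (Y.map Complex.ofReal
        + Complex.I • (symp - X.map Complex.ofReal * symp * (X.map Complex.ofReal)ᵀ)).PosSemidef)) :=
  ⟨⟨fun h => (Hmat_posSemidef_iff X Y one_lt_two).1 (h 2 one_lt_two),
    fun h _ hμ => (Hmat_posSemidef_iff X Y hμ).2 h⟩, fun _ hμ => Hmat_posSemidef_iff X Y hμ⟩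

/-- Choi/TMSV CP test: `H(μ) ⪰ 0` for all `μ > 1` iff the HHW CP matrix
`Y + i(σ − X σ Xᵀ) ⪰ 0`; in fact the equivalence holds for each fixed `μ > 1`. -/
theorem tmsv_cp_equivalence (X Y : Matrix (Fin 2) (Fin 2) ℝ) (hY : Yᵀ = Y) :
    ((∀ μ : ℝ, 1 < μ → (Hmat X Y μ).PosSemidef) ↔
      (Y.map Complex.ofReal
        + Complex.I • (symp - X.map Complex.ofReal * symp * (X.map Complex.ofReal)ᵀ)).PosSemidef) ∧
    (∀ μ : ℝ, 1 < μ → ((Hmat X Y μ).PosSemidef ↔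
      (Y.map Complex.ofReal
        + Complex.I • (symp - X.map Complex.ofReal * symp * (X.map Complex.ofReal)ᵀ)).PosSemidef)) :=
  tmsv_cp_equivalence_general X Y
end
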